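/- The characteristic determinant Δ₀⁰(μ) = (1 + e^{iμ})(iμ + β₁iμe^{−iμ} − β₂e^{−iμ}) + (iμ + β₁iμe^{iμ} + β₂e^{iμ})(1 + e^{−iμ}) factors as Δ₀⁰(μ) = (1 + e^{−iμ})[iμ(β₁ + 1)(e^{iμ} + 1) + β₂(e^{iμ} − 1)], and for β₁ ≠ −1, β₂ ≠ 0 its zeros near (2n+1)π (other than (2n+1)π itself) satisfy μ = (2n+1)π + (2β₂/(β₁+1))·1/((2n+1)π) + O(1/n²) as n → ∞. -/

import Mathlib

/-!
The factorisation is a ring identity in `x = iμ`, `u = e^{iμ}`, `v = e^{-iμ}` modulo `u v = 1`.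

At `μ₀ = (2n+1)π` we have `e^{iμ₀} = -1`. The zeros of the first factor `1 + e^{-iμ}` are `2π`
apart, so near `μ₀` it vanishes only at `μ₀`. A zero `μ = μ₀ + ε` of the second factor satisfies
`iμ(β₁+1)(1 - e^{iε}) = β₂(1 + e^{iε})`; expanding `e^{iε} = 1 + iε + O(ε²)` gives
`ε = 2β₂/((β₁+1)μ) + O(ε²) + O(ε/μ)`, and replacing `1/μ` by `1/μ₀` costs `O(ε/μ²)`.
Since `ε = O(1/n)` and `|μ| ≥ n`, every error term is `O(1/n²)`.
-/

open Complex Real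

theorem charDet_factor_of_mul_eq_one {R : Type*} [CommRing R] {u v : R} (huv : u * v = 1)
    (x β₁ β₂ : R) :
    (1 + u) * (x + β₁ * x * v - β₂ * v) + (x + β₁ * x * u + β₂ * u) * (1 + v)
      = (1 + v) * (x * (β₁ + 1) * (u + 1) + β₂ * (u - 1)) := by
  linear_combination ((β₁ - 1) * x - β₂) * huv

namespace Complex

theorem exp_I_mul_odd_mul_pi (n : ℕ) : exp (I * ((2 * n + 1) * π)) = -1 := by
  rw [show I * ((2 * n + 1) * π) = n * (2 * π * I) + π * I by ring, exp_add_pi_mul_I,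
    exp_nat_mul_two_pi_mul_I]

theorem eq_zero_of_exp_I_mul_eq_one {ε : ℂ} (h : exp (I * ε) = 1) (hε : ‖ε‖ < 2 * π) :
    ε = 0 := by
  obtain ⟨k, hk⟩ := exp_eq_one_iff.1 h
  have hεk : ε = k * (2 * π) := mul_left_cancel₀ I_ne_zero (by rw [hk]; ring)
  have hk1 : |(k : ℝ)| < 1 := by
    simp only [hεk, norm_mul, norm_intCast, Complex.norm_two, norm_real,
      Real.norm_of_nonneg pi_pos.le] at hε
    nlinarith [pi_pos]
  have hk0 : k = 0 := Int.abs_lt_one_iff.1 (by exact_mod_cast hk1)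
  simp [hεk, hk0]

theorem eq_of_one_add_exp_neg_I_mul_eq_zero {μ₀ μ : ℂ} (hμ₀ : exp (I * μ₀) = -1)
    (h : 1 + exp (-I * μ) = 0) (hμ : ‖μ - μ₀‖ < 2 * π) : μ = μ₀ := by
  have h' : exp (-I * μ) = -1 := by linear_combination h
  refine sub_eq_zero.1 (eq_zero_of_exp_I_mul_eq_one ?_ hμ)
  rw [show I * (μ - μ₀) = -(-I * μ + I * μ₀) by ring, exp_neg, exp_add, h', hμ₀]
  norm_num

end Complex

theorem sub_sub_two_mul_div_eq_of_eq_zero {a β₂ μ₀ μ : ℂ} (ha : a ≠ 0) (hμ₀ : μ₀ ≠ 0)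
    (hμ : μ ≠ 0) (hexp : exp (I * μ₀) = -1)
    (h : I * μ * a * (exp (I * μ) + 1) + β₂ * (exp (I * μ) - 1) = 0) :
    μ - μ₀ - 2 * β₂ / a * (1 / μ₀) =
      I * (exp (I * (μ - μ₀)) - 1 - I * (μ - μ₀)) +
        β₂ / a * ((exp (I * (μ - μ₀)) - 1) / μ - 2 * (μ - μ₀) / (μ * μ₀)) := by
  rw [show I * μ = I * μ₀ + I * (μ - μ₀) by ring, Complex.exp_add, hexp] at h
  set w := exp (I * (μ - μ₀))
  field_simp
  linear_combination μ₀ * h + μ * μ₀ * a * (μ - μ₀) * I_sq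

theorem norm_sub_sub_two_mul_div_le_of_eq_zero {a β₂ μ₀ μ : ℂ} (ha : a ≠ 0) (hμ₀ : 1 ≤ ‖μ₀‖)
    (hμ : μ ≠ 0) (hμμ₀ : ‖μ - μ₀‖ ≤ 1) (hexp : exp (I * μ₀) = -1)
    (h : I * μ * a * (exp (I * μ) + 1) + β₂ * (exp (I * μ) - 1) = 0) :
    ‖μ - μ₀ - 2 * β₂ / a * (1 / μ₀)‖ ≤ ‖μ - μ₀‖ ^ 2 + 4 * ‖β₂ / a‖ * ‖μ - μ₀‖ / ‖μ‖ := by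
  rw [sub_sub_two_mul_div_eq_of_eq_zero ha (norm_pos_iff.1 (by linarith)) hμ hexp h]
  set ε := μ - μ₀
  have hIε : ‖I * ε‖ ≤ 1 := by simpa using hμμ₀
  have hdiff : ‖(exp (I * ε) - 1) / μ - 2 * ε / (μ * μ₀)‖ ≤ 4 * ‖ε‖ / ‖μ‖ :=
    calc _ ≤ ‖(exp (I * ε) - 1) / μ‖ + ‖2 * ε / (μ * μ₀)‖ := norm_sub_le _ _
      _ ≤ 2 * ‖ε‖ / ‖μ‖ + 2 * ‖ε‖ / ‖μ‖ := by
        rw [norm_div, norm_div, norm_mul, norm_mul, Complex.norm_two]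
        gcongr
        · simpa using norm_exp_sub_one_le hIε
        · exact le_mul_of_one_le_right (norm_nonneg μ) hμ₀
      _ = 4 * ‖ε‖ / ‖μ‖ := by ring
  calc _ ≤ ‖I * (exp (I * ε) - 1 - I * ε)‖ +
          ‖β₂ / a * ((exp (I * ε) - 1) / μ - 2 * ε / (μ * μ₀))‖ := norm_add_le _ _
    _ ≤ ‖ε‖ ^ 2 + ‖β₂ / a‖ * (4 * ‖ε‖ / ‖μ‖) := by
        rw [norm_mul, norm_I, one_mul, norm_mul (β₂ / a)]
        gcongr
        simpa using norm_exp_sub_one_sub_id_le hIε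
    _ = _ := by ring

theorem stmt_15_general (β₁ β₂ : ℂ) (hβ₁ : β₁ ≠ -1) :
    (∀ μ : ℂ,
      (1 + exp (I * μ)) * (I * μ + β₁ * (I * μ) * exp (-I * μ) - β₂ * exp (-I * μ))
        + (I * μ + β₁ * (I * μ) * exp (I * μ) + β₂ * exp (I * μ)) * (1 + exp (-I * μ))
      = (1 + exp (-I * μ)) *
          (I * μ * (β₁ + 1) * (exp (I * μ) + 1) + β₂ * (exp (I * μ) - 1))) ∧
    ∀ C : ℝ, 0 < C → ∃ (K : ℝ) (N : ℕ), ∀ n : ℕ, N ≤ n → ∀ μ : ℂ,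
      (1 + exp (-I * μ)) *
          (I * μ * (β₁ + 1) * (exp (I * μ) + 1) + β₂ * (exp (I * μ) - 1)) = 0 →
      ‖μ - (2 * n + 1) * π‖ ≤ C / n →
      μ ≠ (2 * n + 1) * π →
      ‖μ - (2 * n + 1) * π - (2 * β₂ / (β₁ + 1)) * (1 / ((2 * n + 1) * π))‖
        ≤ K / (n : ℝ) ^ 2 := by
  refine ⟨fun μ => charDet_factor_of_mul_eq_one ?_ _ _ _, fun C _ => ?_⟩
  · rw [← Complex.exp_add, show I * μ + -I * μ = 0 by ring, Complex.exp_zero]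
  have ha : β₁ + 1 ≠ 0 := fun h => hβ₁ (eq_neg_of_add_eq_zero_left h)
  refine ⟨C ^ 2 + 4 * ‖β₂ / (β₁ + 1)‖ * C, ⌈C⌉₊ + 1, fun n hn μ hzero hnear hne => ?_⟩
  have hCn : C + 1 ≤ n := by
    have : ((⌈C⌉₊ + 1 : ℕ) : ℝ) ≤ n := by exact_mod_cast hn
    push_cast at this
    linarith [Nat.le_ceil C]
  have hnear1 : ‖μ - (2 * n + 1) * π‖ ≤ 1 :=
    hnear.trans ((div_le_one (by linarith)).2 (by linarith))
  have hμ₀ : (n : ℝ) + 1 ≤ ‖(2 * n + 1 : ℂ) * π‖ := by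
    rw [show ((2 * n + 1 : ℂ) * π) = ((2 * n + 1) * π : ℝ) by push_cast; ring, norm_real,
      Real.norm_of_nonneg (by positivity)]
    nlinarith [pi_gt_three]
  have hμ : (n : ℝ) ≤ ‖μ‖ := by
    linarith [norm_sub_norm_le ((2 * n + 1 : ℂ) * π) μ, norm_sub_rev μ ((2 * n + 1 : ℂ) * π)]
  rcases mul_eq_zero.1 hzero with h | h
  · exact absurd (eq_of_one_add_exp_neg_I_mul_eq_zero (exp_I_mul_odd_mul_pi n) h
      (by linarith [pi_gt_three])) hne
  calc _ ≤ ‖μ - (2 * n + 1) * π‖ ^ 2 + 4 * ‖β₂ / (β₁ + 1)‖ * ‖μ - (2 * n + 1) * π‖ / ‖μ‖ :=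
        norm_sub_sub_two_mul_div_le_of_eq_zero ha (by linarith) (norm_pos_iff.1 (by linarith))
          hnear1 (exp_I_mul_odd_mul_pi n) h
    _ ≤ (C / n) ^ 2 + 4 * ‖β₂ / (β₁ + 1)‖ * (C / n) / n := by gcongr; linarith
    _ = _ := by ring

theorem stmt_15 (β₁ β₂ : ℂ) (hβ₁ : β₁ ≠ -1) (hβ₂ : β₂ ≠ 0) :
    (∀ μ : ℂ,
      (1 + exp (I * μ)) * (I * μ + β₁ * (I * μ) * exp (-I * μ) - β₂ * exp (-I * μ))
        + (I * μ + β₁ * (I * μ) * exp (I * μ) + β₂ * exp (I * μ)) * (1 + exp (-I * μ))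
      = (1 + exp (-I * μ)) *
          (I * μ * (β₁ + 1) * (exp (I * μ) + 1) + β₂ * (exp (I * μ) - 1))) ∧
    ∀ C : ℝ, 0 < C → ∃ (K : ℝ) (N : ℕ), ∀ n : ℕ, N ≤ n → ∀ μ : ℂ,
      (1 + exp (-I * μ)) *
          (I * μ * (β₁ + 1) * (exp (I * μ) + 1) + β₂ * (exp (I * μ) - 1)) = 0 →
      ‖μ - (2 * n + 1) * π‖ ≤ C / n →
      μ ≠ (2 * n + 1) * π →
      ‖μ - (2 * n + 1) * π - (2 * β₂ / (β₁ + 1)) * (1 / ((2 * n + 1) * π))‖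
        ≤ K / (n : ℝ) ^ 2 :=
  stmt_15_general β₁ β₂ hβ₁
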